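/- arXiv:0710.2685 — 4 statements merged into one kernel-verified Lean document; each statement's English description precedes it below -/
import Mathlib

section
/- If a Three Hat configuration s has all entries distinct, then the maximum entry of σ(s) is strictly less than the maximum entry of s. -/
/-- A Three Hat configuration: a triple of positive integers in which
one entry equals the sum of the other two. -/
def ThreeHat.IsConfig (s : ℕ × ℕ × ℕ) : Prop :=
  0 < s.1 ∧ 0 < s.2.1 ∧ 0 < s.2.2 ∧
    (s.1 = s.2.1 + s.2.2 ∨ s.2.1 = s.1 + s.2.2 ∨ s.2.2 = s.1 + s.2.1)

/-- A base configuration: two of the entries are equal. -/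
def ThreeHat.IsBase (s : ℕ × ℕ × ℕ) : Prop :=
  s.1 = s.2.1 ∨ s.1 = s.2.2 ∨ s.2.1 = s.2.2

/-- The reduction map σ: fixes base configurations, otherwise replaces the
largest entry by the difference of the other two. -/
def ThreeHat.step (s : ℕ × ℕ × ℕ) : ℕ × ℕ × ℕ :=
  let a := s.1; let b := s.2.1; let c := s.2.2
  if a = b ∨ a = c ∨ b = c then s
  else if b < a ∧ c < a then (max b c - min b c, b, c)
  else if a < b ∧ c < b then (a, max a c - min a c, c)
  else (a, b, max a b - min a b)

/-- The maximum entry of a configuration. -/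
def ThreeHat.max3 (s : ℕ × ℕ × ℕ) : ℕ := max s.1 (max s.2.1 s.2.2)


namespace ThreeHat

lemma max3_lt_iff {s : ℕ × ℕ × ℕ} {n : ℕ} :
    max3 s < n ↔ s.1 < n ∧ s.2.1 < n ∧ s.2.2 < n := by
  simp only [max3, max_lt_iff]

lemma max_sub_min_lt {x y n : ℕ} (hx : x < n) (hy : y < n) : max x y - min x y < n :=
  (Nat.sub_le _ _).trans_lt (max_lt hx hy)

variable {a b c : ℕ}

lemma max3_replace_fst_lt (hb : b < a) (hc : c < a) :
    max3 (max b c - min b c, b, c) < max3 (a, b, c) :=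
  (max3_lt_iff.2 ⟨max_sub_min_lt hb hc, hb, hc⟩).trans_le (le_max_left _ _)

lemma max3_replace_snd_lt (ha : a < b) (hc : c < b) :
    max3 (a, max a c - min a c, c) < max3 (a, b, c) :=
  (max3_lt_iff.2 ⟨ha, max_sub_min_lt ha hc, hc⟩).trans_le
    ((le_max_left _ _).trans (le_max_right _ _))

lemma max3_replace_snd_snd_lt (ha : a < c) (hb : b < c) :
    max3 (a, b, max a b - min a b) < max3 (a, b, c) :=
  (max3_lt_iff.2 ⟨ha, hb, max_sub_min_lt ha hb⟩).trans_le
    ((le_max_right _ _).trans (le_max_right _ _))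

end ThreeHat

theorem three_hat_step_max_decreases_general (s : ℕ × ℕ × ℕ)
    (hdist : s.1 ≠ s.2.1 ∧ s.1 ≠ s.2.2 ∧ s.2.1 ≠ s.2.2) :
    ThreeHat.max3 (ThreeHat.step s) < ThreeHat.max3 s := by
  obtain ⟨a, b, c⟩ := s
  obtain ⟨hab, hac, hbc⟩ := hdist
  dsimp only [ThreeHat.step] at *
  rw [if_neg (by tauto)]
  split_ifs with ha hb
  · exact ThreeHat.max3_replace_fst_lt ha.1 ha.2
  · exact ThreeHat.max3_replace_snd_lt hb.1 hb.2
  · exact ThreeHat.max3_replace_snd_snd_lt (by omega) (by omega)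

theorem three_hat_step_max_decreases (s : ℕ × ℕ × ℕ) (h : ThreeHat.IsConfig s)
    (hdist : s.1 ≠ s.2.1 ∧ s.1 ≠ s.2.2 ∧ s.2.1 ≠ s.2.2) :
    ThreeHat.max3 (ThreeHat.step s) < ThreeHat.max3 s :=
  three_hat_step_max_decreases_general s hdist
end

section
/- For every Three Hat configuration s there exists n ≥ 0 such that σ^n(s) is a base configuration (has two equal entries). -/
theorem Function.exists_iterate_of_lt_measure {α : Type*} {f : α → α} (μ : α → ℕ)
    {p q : α → Prop} (hf : ∀ x, p x → ¬ q x → p (f x) ∧ μ (f x) < μ x) {x : α} (hx : p x) :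
    ∃ n, q (f^[n] x) := by
  induction hμ : μ x using Nat.strong_induction_on generalizing x with
  | _ m ih =>
    by_cases hq : q x
    · exact ⟨0, hq⟩
    obtain ⟨hfx, hlt⟩ := hf x hx hq
    obtain ⟨n, hn⟩ := ih _ (hμ ▸ hlt) hfx rfl
    exact ⟨n + 1, by rwa [Function.iterate_succ_apply]⟩

namespace ThreeHat

theorem max3_step_lt {s : ℕ × ℕ × ℕ} (hs : ¬ IsBase s) : max3 (step s) < max3 s := by
  obtain ⟨a, b, c⟩ := s
  simp only [IsBase, step, max3] at *
  split_ifs <;> dsimp only <;> omega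

theorem IsConfig.step {s : ℕ × ℕ × ℕ} (h : IsConfig s) (hs : ¬ IsBase s) :
    IsConfig (step s) := by
  obtain ⟨a, b, c⟩ := s
  simp only [IsConfig, IsBase, ThreeHat.step] at *
  split_ifs <;> dsimp only <;> omega

end ThreeHat

theorem three_hat_reaches_base (s : ℕ × ℕ × ℕ) (h : ThreeHat.IsConfig s) :
    ∃ n : ℕ, ThreeHat.IsBase (ThreeHat.step^[n] s) :=
  Function.exists_iterate_of_lt_measure ThreeHat.max3
    (fun _ hs hb => ⟨hs.step hb, ThreeHat.max3_step_lt hb⟩) h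
end

section
/- There is a unique triple (b, c) of positive integers such that the Three Hat configuration [50, b, c] (with 50 equal to the sum of b and c or one of b, c equal to the sum of the other two, as appropriate) terminates with Player A declaring 50 on turn 4 under the Chain Reduction Strategy, namely (b,c) = (20,30). Equivalently, [50,20,30] is the unique configuration with a = 50 and r([a,b,c]) = 4 ending with Player A. -/
/-- The index (0 for A, 1 for B, 2 for C) of the player holding the cue,
i.e. whose number is the sum of the other two. -/
def ThreeHat.cue (s : ℕ × ℕ × ℕ) : ℕ :=
  if s.1 = s.2.1 + s.2.2 then 0 else if s.2.1 = s.1 + s.2.2 then 1 else 2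

/-- Turn count of the Chain Reduction Strategy, computed with fuel. -/
def ThreeHat.rAux : ℕ → ℕ × ℕ × ℕ → ℕ
  | 0, s => ThreeHat.cue s + 1
  | n + 1, s =>
    if s.1 = s.2.1 ∨ s.1 = s.2.2 ∨ s.2.1 = s.2.2 then ThreeHat.cue s + 1
    else ThreeHat.rAux n (ThreeHat.step s) +
      ((ThreeHat.cue s + 2 - ThreeHat.cue (ThreeHat.step s)) % 3 + 1)

/-- The turn on which the game ends under the Chain Reduction Strategy. -/
def ThreeHat.r (s : ℕ × ℕ × ℕ) : ℕ := ThreeHat.rAux (ThreeHat.max3 s) s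

theorem ThreeHat.r_fifty_eq_four_iff : ∀ b < 50, ThreeHat.r (50, b, 50 - b) = 4 ↔ b = 20 := by
  decide

theorem three_hat_first_puzzle_unique (b c : ℕ) :
    (0 < b ∧ 0 < c ∧ 50 = b + c ∧ ThreeHat.r (50, b, c) = 4) ↔ (b = 20 ∧ c = 30) := by
  constructor
  · rintro ⟨-, hc, hsum, hr⟩
    have hb : b < 50 := by omega
    obtain rfl : c = 50 - b := by omega
    obtain rfl : b = 20 := (ThreeHat.r_fifty_eq_four_iff b hb).1 hr
    exact ⟨rfl, rfl⟩
  · rintro ⟨rfl, rfl⟩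
    exact ⟨by norm_num, by norm_num, rfl, (ThreeHat.r_fifty_eq_four_iff 20 (by norm_num)).2 rfl⟩
end

section
/- For every positive integer M ≥ 2 there exists a Three Hat configuration s with pairwise coprime entries whose chain length N(s) (least n with σ^n(s) base) is at least M; for example, configurations built from consecutive Fibonacci numbers [F(k+1), F(k), F(k-1)] have N growing linearly in k. -/
/-!
In `fibTriple j = (F(j+2), F(j+1), F(j))` the step σ replaces `F(j+2)` by `F(j+2) - F(j+1) = F(j)`,
which yields `fibTriple (j-1)` cyclically rotated. Since σ commutes with cyclic rotation,
`σ^n (fibTriple (j+n))` is a rotation of `fibTriple j`, and `fibTriple j` is base exactly when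
`j ≤ 1`; so the chain of `fibTriple (j+1)` has length exactly `j`.
-/

namespace ThreeHat

def rotate {α : Type*} (s : α × α × α) : α × α × α := (s.2.2, s.1, s.2.1)

theorem isBase_rotate_iff (s : ℕ × ℕ × ℕ) : IsBase (rotate s) ↔ IsBase s := by
  obtain ⟨a, b, c⟩ := s
  simp only [IsBase, rotate]
  omega

theorem isBase_iterate_rotate_iff (n : ℕ) (s : ℕ × ℕ × ℕ) :
    IsBase (rotate^[n] s) ↔ IsBase s := by
  induction n with
  | zero => rfl
  | succ n ih => rw [Function.iterate_succ_apply', isBase_rotate_iff, ih]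

theorem step_rotate (s : ℕ × ℕ × ℕ) : step (rotate s) = rotate (step s) := by
  obtain ⟨a, b, c⟩ := s
  simp only [step, rotate]
  split_ifs <;> grind

def fibTriple (j : ℕ) : ℕ × ℕ × ℕ := (Nat.fib (j + 2), Nat.fib (j + 1), Nat.fib j)

theorem isConfig_fibTriple {j : ℕ} (hj : 1 ≤ j) : IsConfig (fibTriple j) :=
  ⟨Nat.fib_pos.2 (by omega), Nat.fib_pos.2 (by omega), Nat.fib_pos.2 hj,
    Or.inl (by rw [fibTriple, Nat.fib_add_two, add_comm])⟩

theorem coprime_fibTriple (j : ℕ) :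
    Nat.Coprime (fibTriple j).1 (fibTriple j).2.1 ∧
      Nat.Coprime (fibTriple j).1 (fibTriple j).2.2 ∧ Nat.Coprime (fibTriple j).2.1 (fibTriple j).2.2 := by
  have hsucc : Nat.Coprime (Nat.fib j) (Nat.fib (j + 1)) := Nat.fib_coprime_fib_succ j
  refine ⟨(Nat.fib_coprime_fib_succ (j + 1)).symm, ?_, hsucc.symm⟩
  show Nat.Coprime (Nat.fib (j + 2)) (Nat.fib j)
  rw [Nat.fib_add_two, Nat.coprime_self_add_left]
  exact hsucc.symm

theorem isBase_fibTriple_iff (j : ℕ) : IsBase (fibTriple j) ↔ j ≤ 1 := by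
  constructor
  · intro hbase
    by_contra! hj
    have h₁ : Nat.fib j < Nat.fib (j + 1) := Nat.fib_lt_fib_succ hj
    have h₂ : Nat.fib (j + 1) < Nat.fib (j + 2) := Nat.fib_lt_fib_succ (by omega)
    simp only [IsBase, fibTriple] at hbase
    omega
  · intro hj
    interval_cases j <;> simp [IsBase, fibTriple]

theorem step_of_lt_of_lt {a b c : ℕ} (hcb : c < b) (hba : b < a) :
    step (a, b, c) = (b - c, b, c) := by
  simp only [step]
  rw [if_neg (by omega), if_pos ⟨hba, by omega⟩, max_eq_left hcb.le, min_eq_right hcb.le]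

theorem step_fibTriple_succ {j : ℕ} (hj : 1 ≤ j) :
    step (fibTriple (j + 1)) = rotate (fibTriple j) := by
  rw [fibTriple,
    step_of_lt_of_lt (Nat.fib_lt_fib_succ (by omega)) (Nat.fib_lt_fib_succ (by omega)),
    Nat.fib_add_two_sub_fib_add_one]
  rfl

theorem iterate_step_fibTriple {j : ℕ} (hj : 1 ≤ j) (n : ℕ) :
    step^[n] (fibTriple (j + n)) = rotate^[n] (fibTriple j) := by
  induction n with
  | zero => rfl
  | succ n ih =>
    rw [Function.iterate_succ_apply, ← add_assoc, step_fibTriple_succ (by omega),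
      (Function.Commute.iterate_left step_rotate n).eq, ih, Function.iterate_succ_apply']

theorem isLeast_chainLength_fibTriple (j : ℕ) :
    IsLeast {n : ℕ | IsBase (step^[n] (fibTriple (j + 1)))} j := by
  refine ⟨?_, fun n hn => ?_⟩
  · rw [Set.mem_ofPred_eq, add_comm, iterate_step_fibTriple le_rfl, isBase_iterate_rotate_iff,
      isBase_fibTriple_iff]
  · by_contra! hlt
    rw [Set.mem_ofPred_eq, show j + 1 = (j + 1 - n) + n by omega,
      iterate_step_fibTriple (by omega), isBase_iterate_rotate_iff, isBase_fibTriple_iff] at hn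
    omega

end ThreeHat

theorem three_hat_unbounded_chains :
    (∀ M : ℕ, 2 ≤ M → ∃ s : ℕ × ℕ × ℕ, ThreeHat.IsConfig s ∧
      Nat.Coprime s.1 s.2.1 ∧ Nat.Coprime s.1 s.2.2 ∧ Nat.Coprime s.2.1 s.2.2 ∧
      ∃ N : ℕ, IsLeast {n : ℕ | ThreeHat.IsBase (ThreeHat.step^[n] s)} N ∧ M ≤ N) ∧
    ∀ k : ℕ, 3 ≤ k →
      ThreeHat.IsConfig (Nat.fib (k + 1), Nat.fib k, Nat.fib (k - 1)) ∧
      ∃ N : ℕ, IsLeast {n : ℕ | ThreeHat.IsBase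
          (ThreeHat.step^[n] (Nat.fib (k + 1), Nat.fib k, Nat.fib (k - 1)))} N ∧
        k - 2 ≤ N := by
  refine ⟨fun M _ => ?_, fun k hk => ?_⟩
  · obtain ⟨h₁, h₂, h₃⟩ := ThreeHat.coprime_fibTriple (M + 1)
    exact ⟨_, ThreeHat.isConfig_fibTriple (by omega), h₁, h₂, h₃, M,
      ThreeHat.isLeast_chainLength_fibTriple M, le_rfl⟩
  · obtain ⟨j, rfl⟩ : ∃ j, k = j + 2 := ⟨k - 2, by omega⟩
    exact ⟨ThreeHat.isConfig_fibTriple (by omega), j,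
      ThreeHat.isLeast_chainLength_fibTriple j, le_rfl⟩
end
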